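/- Let n ≥ 1, let I ⊆ [n] have odd cardinality, and define f : {0,1}ⁿ → {0,1}ⁿ by fᵢ(s) = 1 − s_{i−1} if i ∈ I and fᵢ(s) = s_{i−1} if i ∉ I, where indices are cyclic (the index i − 1 is taken to be n when i = 1). Then the Boolean system ({0,1}ⁿ, f) has exactly one one-stepping orbit, and this orbit has length 2n. That is: there exists s₀ ∈ {0,1}ⁿ such that the trajectory of s₀ under f is one-stepping, f^{2n}(s₀) = s₀, the orbit {f^τ(s₀) : τ ≥ 0} has exactly 2n elements, and every s ∈ {0,1}ⁿ whose trajectory under f is one-stepping belongs to this orbit. -/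

import Mathlib

/-!
Over `𝔽₂` the map `f` is affine with linear part the cyclic shift, so `f a + f b` is the shift
of `a + b`. Hence `f` is a Hamming isometry: a trajectory is one-stepping iff `s` and `f s` differ
in exactly one coordinate `j`, and this coordinate advances by one at every step. Two states
flipping at the same `j` differ by a shift-invariant, i.e. constant, vector, so they are equal or
complementary. Because `|I|` is odd, `f^n` is complementation. The state whose `i`-th bit is the
parity of `|{k ∈ I | k ≤ i}|` flips only at `0`; its orbit contains, for every `j`, both states
flipping at `j`, and has length exactly `2n`, since a period must move the flip back to `0`.
-/

open Function Finset

theorem Function.ncard_range_iterate {α : Type*} {f : α → α} {x : α}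
    (hx : x ∈ periodicPts f) :
    (Set.range fun k => f^[k] x).ncard = minimalPeriod f x := by
  have hrange : (Set.range fun k => f^[k] x) = (f^[·] x) '' Set.Iio (minimalPeriod f x) := by
    refine (Set.image_subset_range _ _).antisymm' ?_
    rintro _ ⟨k, rfl⟩
    exact ⟨k % minimalPeriod f x, Nat.mod_lt _ (minimalPeriod_pos_of_mem_periodicPts hx),
      iterate_mod_minimalPeriod_eq⟩
  rw [hrange, iterate_injOn_Iio_minimalPeriod.ncard_image, Set.ncard_eq_toFinset_card',
    Set.toFinset_Iio, Nat.card_Iio]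

namespace Fin

open Fin.NatCast Fin.CommRing

variable {n : ℕ} [NeZero n]

theorem apply_eq_apply_of_forall_apply_sub_one {α : Type*} {g : Fin n → α}
    (h : ∀ i, g i = g (i - 1)) (i j : Fin n) : g i = g j := by
  have from_zero : ∀ k : ℕ, g k = g 0 := by
    intro k
    induction k with
    | zero => rfl
    | succ k ih => rw [h, ← ih]; push_cast; ring_nf
  rw [← cast_val_eq_self i, ← cast_val_eq_self j, from_zero, from_zero]

theorem le_neg_one (k : Fin n) : k ≤ -1 := by
  obtain ⟨m, rfl⟩ := Nat.exists_eq_succ_of_ne_zero (NeZero.ne n)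
  rw [le_iff_val_le_val, coe_neg_one]
  exact Nat.le_of_lt_succ k.isLt

theorem le_iff_le_sub_one_or_eq {i k : Fin n} (hi : i ≠ 0) :
    k ≤ i ↔ k ≤ i - 1 ∨ k = i := by
  rw [le_iff_val_le_val, le_iff_val_le_val, val_sub_one_of_ne_zero hi, Fin.ext_iff]
  have := pos_iff_ne_zero.mpr hi
  omega

theorem sub_one_lt_of_ne_zero {i : Fin n} (hi : i ≠ 0) : i - 1 < i := by
  rw [lt_def, val_sub_one_of_ne_zero hi]
  exact Nat.sub_one_lt (val_ne_zero_iff.mpr hi)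

end Fin

section NegShift

open Fin.NatCast Fin.CommRing

variable {n : ℕ} [NeZero n] (I : Finset (Fin n))

def negShift (s : Fin n → Bool) : Fin n → Bool :=
  fun i => if i ∈ I then !(s (i - 1)) else s (i - 1)

variable {I}

theorem xor_negShift (a b : Fin n → Bool) (i : Fin n) :
    (negShift I a i ^^ negShift I b i) = (a (i - 1) ^^ b (i - 1)) := by
  unfold negShift
  split_ifs <;> simp

theorem xor_iterate_negShift (k : ℕ) (a b : Fin n → Bool) (i : Fin n) :
    ((negShift I)^[k] a i ^^ (negShift I)^[k] b i) = (a (i - k) ^^ b (i - k)) := by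
  induction k generalizing i with
  | zero => simp
  | succ k ih =>
    rw [iterate_succ_apply', iterate_succ_apply', xor_negShift, ih]
    push_cast
    ring_nf

theorem iterate_negShift_ne_iff (k : ℕ) (a b : Fin n → Bool) (i : Fin n) :
    (negShift I)^[k] a i ≠ (negShift I)^[k] b i ↔ a (i - k) ≠ b (i - k) := by
  rw [← Bool.xor_iff_ne, ← Bool.xor_iff_ne, xor_iterate_negShift]

theorem hammingDist_iterate_negShift (k : ℕ) (a b : Fin n → Bool) :
    hammingDist ((negShift I)^[k] a) ((negShift I)^[k] b) = hammingDist a b :=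
  card_equiv (Equiv.subRight (k : Fin n)) fun i => by
    simp [iterate_negShift_ne_iff]

def prefixParity (I : Finset (Fin n)) (i : Fin n) : Bool :=
  decide (Odd #{k ∈ I | k ≤ i})

def FlipsOnlyAt (I : Finset (Fin n)) (s : Fin n → Bool) (j : Fin n) : Prop :=
  ∀ i, negShift I s i = (s i ^^ decide (i = j))

theorem prefixParity_neg_one (hI : Odd #I) : prefixParity I (-1) = true := by
  simpa [prefixParity, Fin.le_neg_one]

theorem prefixParity_zero : prefixParity I 0 = decide (0 ∈ I) := by
  by_cases h0 : 0 ∈ I <;> simp [prefixParity, filter_eq', h0]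

theorem prefixParity_of_ne_zero {i : Fin n} (hi : i ≠ 0) :
    prefixParity I i = (decide (i ∈ I) ^^ prefixParity I (i - 1)) := by
  have hsplit : {k ∈ I | k ≤ i} = {k ∈ I | k ≤ i - 1} ∪ {k ∈ I | k = i} := by
    rw [← filter_or]
    exact filter_congr fun k _ => Fin.le_iff_le_sub_one_or_eq hi
  have hdisj : Disjoint {k ∈ I | k ≤ i - 1} {k ∈ I | k = i} := by
    rw [disjoint_filter]
    rintro k - hk rfl
    exact hk.not_gt (Fin.sub_one_lt_of_ne_zero hi)
  rw [prefixParity, prefixParity, hsplit, card_union_of_disjoint hdisj, filter_eq']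
  by_cases hiI : i ∈ I <;> simp [hiI, Nat.odd_add_one, -Nat.not_odd_iff_even]

theorem flipsOnlyAt_prefixParity (hI : Odd #I) : FlipsOnlyAt I (prefixParity I) 0 := by
  intro i
  rcases eq_or_ne i 0 with rfl | hi
  · simp only [negShift, zero_sub, prefixParity_neg_one hI, prefixParity_zero]
    split_ifs <;> simp [*]
  · simp only [negShift, prefixParity_of_ne_zero hi, hi]
    split_ifs <;> simp [*]

theorem FlipsOnlyAt.hammingDist_eq_one {s : Fin n → Bool} {j : Fin n} (hs : FlipsOnlyAt I s j) :
    hammingDist s (negShift I s) = 1 :=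
  card_eq_one.mpr ⟨j, by ext i; rw [mem_filter, hs i]; by_cases i = j <;> simp [*]⟩

theorem FlipsOnlyAt.unique {s : Fin n → Bool} {j j' : Fin n} (hs : FlipsOnlyAt I s j)
    (hs' : FlipsOnlyAt I s j') : j = j' := by
  by_contra hne
  simpa [hne] using (hs j).symm.trans (hs' j)

theorem FlipsOnlyAt.eq_or_eq_not {s t : Fin n → Bool} {j : Fin n} (hs : FlipsOnlyAt I s j)
    (ht : FlipsOnlyAt I t j) : t = s ∨ t = fun i => !s i := by
  have hshift : ∀ i, (s i ^^ t i) = (s (i - 1) ^^ t (i - 1)) := by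
    intro i
    rw [← xor_negShift, hs, ht]
    simp [Bool.xor_comm, Bool.xor_left_comm]
  have hconst (i : Fin n) : t i = (s i ^^ (s 0 ^^ t 0)) := by
    rw [← Fin.apply_eq_apply_of_forall_apply_sub_one hshift i 0]
    simp
  cases h0 : (s 0 ^^ t 0)
  · exact .inl (funext fun i => by simpa [h0] using hconst i)
  · exact .inr (funext fun i => by simpa [h0] using hconst i)

theorem flipsOnlyAt_iterate_prefixParity (hI : Odd #I) (k : ℕ) :
    FlipsOnlyAt I ((negShift I)^[k] (prefixParity I)) k := by
  intro i
  have h := xor_iterate_negShift (I := I) k (negShift I (prefixParity I)) (prefixParity I) i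
  rw [flipsOnlyAt_prefixParity hI, ← iterate_succ_apply, iterate_succ_apply'] at h
  rw [← Bool.xor_left_inj (z := (negShift I)^[k] (prefixParity I) i), h]
  simp [Bool.xor_comm, Bool.xor_left_comm, sub_eq_zero]

theorem iterate_negShift_prefixParity (hI : Odd #I) {k : ℕ} (hk : k ≤ n) (i : Fin n) :
    (negShift I)^[k] (prefixParity I) i = (prefixParity I i ^^ decide (i.val < k)) := by
  induction k with
  | zero => simp
  | succ k ih =>
    have hlt : (decide (i.val < k) ^^ decide (i = k)) = decide (i.val < k + 1) := by
      simp only [Fin.ext_iff, Fin.val_natCast, Nat.mod_eq_of_lt hk]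
      by_cases i.val < k <;> by_cases i.val = k <;> simp_all <;> omega
    rw [iterate_succ_apply', flipsOnlyAt_iterate_prefixParity hI, ih (by omega), Bool.xor_assoc,
      hlt]

theorem iterate_negShift_n (hI : Odd #I) (s : Fin n → Bool) :
    (negShift I)^[n] s = fun i => !s i := by
  funext i
  have h := xor_iterate_negShift (I := I) n s (prefixParity I) i
  rw [Fin.natCast_self, sub_zero, iterate_negShift_prefixParity hI le_rfl] at h
  simp only [i.isLt, decide_true, Bool.xor_true] at h
  rw [← Bool.xor_left_inj (z := !prefixParity I i), h]
  simp

theorem iterate_negShift_two_mul (hI : Odd #I) (s : Fin n → Bool) :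
    (negShift I)^[2 * n] s = s := by
  rw [two_mul, iterate_add_apply, iterate_negShift_n hI, iterate_negShift_n hI]
  simp

theorem negShift_ne_self (hI : Odd #I) (s : Fin n → Bool) : negShift I s ≠ s := by
  intro hfix
  have := congrFun ((iterate_fixed hfix n).symm.trans (iterate_negShift_n hI s)) 0
  simp at this

theorem exists_flipsOnlyAt (hI : Odd #I) {s : Fin n → Bool}
    (hs : hammingDist s (negShift I s) ≤ 1) :
    ∃ j, FlipsOnlyAt I s j := by
  have hpos := hammingDist_pos.mpr (negShift_ne_self hI s).symm
  obtain ⟨j, hj⟩ := card_eq_one.mp (hs.antisymm hpos)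
  refine ⟨j, fun i => ?_⟩
  have hi : s i ≠ negShift I s i ↔ i = j := by simpa using congrArg (i ∈ ·) hj
  by_cases h : i = j <;> simpa [h, eq_comm, Bool.eq_not_iff] using hi

theorem exists_iterate_prefixParity_eq (hI : Odd #I) {s : Fin n → Bool} {j : Fin n}
    (hs : FlipsOnlyAt I s j) : ∃ τ, (negShift I)^[τ] (prefixParity I) = s := by
  have hj := flipsOnlyAt_iterate_prefixParity hI j.val
  rw [Fin.cast_val_eq_self] at hj
  rcases hj.eq_or_eq_not hs with h | h
  · exact ⟨j, h.symm⟩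
  · exact ⟨n + j, by rw [iterate_add_apply, iterate_negShift_n hI, h]⟩

theorem minimalPeriod_negShift_prefixParity (hI : Odd #I) :
    minimalPeriod (negShift I) (prefixParity I) = 2 * n := by
  set p := minimalPeriod (negShift I) (prefixParity I)
  have hp_dvd : p ∣ 2 * n := IsPeriodicPt.minimalPeriod_dvd (iterate_negShift_two_mul hI _)
  have hp_pos : 0 < p := minimalPeriod_pos_of_mem_periodicPts
    (mk_mem_periodicPts (Nat.mul_pos two_pos (NeZero.pos n)) (iterate_negShift_two_mul hI _))
  have hp_fixed : (negShift I)^[p] (prefixParity I) = prefixParity I :=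
    isPeriodicPt_minimalPeriod _ _
  obtain ⟨q, hq⟩ : n ∣ p := by
    have := flipsOnlyAt_iterate_prefixParity hI p
    rw [hp_fixed] at this
    exact Fin.natCast_eq_zero.mp ((flipsOnlyAt_prefixParity hI).unique this).symm
  have hq2 : q ∣ 2 := by
    rw [hq, mul_comm 2] at hp_dvd
    exact Nat.dvd_of_mul_dvd_mul_left (NeZero.pos n) hp_dvd
  have hq_le : q ≤ 2 := Nat.le_of_dvd two_pos hq2
  have hq1 : q ≠ 1 := by
    rintro rfl
    have := congrFun hp_fixed 0
    rw [hq, mul_one, iterate_negShift_n hI] at this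
    simp at this
  obtain rfl : q = 2 := by interval_cases q <;> omega
  rw [hq, mul_comm]

end NegShift

theorem stmt_6 (n : ℕ) [NeZero n] (I : Finset (Fin n)) (hI : Odd I.card)
    (f : (Fin n → Bool) → Fin n → Bool)
    (hf : ∀ (s : Fin n → Bool) (i : Fin n),
      f s i = if i ∈ I then !(s (i - 1)) else s (i - 1)) :
    ∃ s0 : Fin n → Bool,
      (∀ τ, hammingDist (f^[τ] s0) (f^[τ + 1] s0) ≤ 1) ∧
      f^[2 * n] s0 = s0 ∧
      (Set.range fun τ : ℕ => f^[τ] s0).ncard = 2 * n ∧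
      (∀ s : Fin n → Bool,
        (∀ τ, hammingDist (f^[τ] s) (f^[τ + 1] s) ≤ 1) →
        ∃ τ : ℕ, f^[τ] s0 = s) := by
  obtain rfl : f = negShift I := funext fun s => funext (hf s)
  have hperiodic := iterate_negShift_two_mul hI (prefixParity I)
  refine ⟨prefixParity I, fun τ => ?_, hperiodic, ?_, fun s hs => ?_⟩
  · rw [iterate_succ_apply, hammingDist_iterate_negShift,
      (flipsOnlyAt_prefixParity hI).hammingDist_eq_one]
  · rw [ncard_range_iterate (mk_mem_periodicPts (Nat.mul_pos two_pos (NeZero.pos n)) hperiodic),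
      minimalPeriod_negShift_prefixParity hI]
  · obtain ⟨j, hj⟩ := exists_flipsOnlyAt hI (by simpa using hs 0)
    exact exists_iterate_prefixParity_eq hI hj
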